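/- For the Fubini–Study Bergman kernel F_n(z,w) = ((n+1)/π) · (1+z·conj(w))^n / ((1+|z|²)^{n/2} (1+|w|²)^{n/2}) on ℂ, the rescaled kernel satisfies, for each fixed u, v ∈ ℂ, lim_{n→∞} (π/n) F_n(u/√n, v/√n) = exp(u·conj(v) − |u|²/2 − |v|²/2). -/

import Mathlib

open Filter Topology

lemma inv_natCast_tendsto_zero : Tendsto (fun n : ℕ => ((n : ℂ))⁻¹) atTop (𝓝 0) := by
  have h : Tendsto (fun n : ℕ => ((n : ℝ))⁻¹) atTop (𝓝 0) :=
    tendsto_inv_atTop_zero.comp tendsto_natCast_atTop_atTop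
  have := (Complex.continuous_ofReal.tendsto 0).comp h
  simpa [Function.comp_def] using this

lemma complex_one_add_div_pow (z : ℂ) :
    Tendsto (fun n : ℕ => (1 + z / n) ^ n) atTop (𝓝 (Complex.exp z)) := by
  rcases eq_or_ne z 0 with rfl | hz
  · simpa using (tendsto_const_nhds : Tendsto (fun _ : ℕ => (1:ℂ)) atTop _)
  have hzn : Tendsto (fun n : ℕ => z / (n : ℂ)) atTop (𝓝 0) := by
    have := inv_natCast_tendsto_zero.const_mul z
    simpa [div_eq_mul_inv] using this
  have hder : HasDerivAt Complex.log 1 1 := by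
    simpa using Complex.hasDerivAt_log (by simp [Complex.slitPlane] : (1:ℂ) ∈ Complex.slitPlane)
  have hslope := hasDerivAt_iff_tendsto_slope.mp hder
  have hmem : ∀ᶠ n : ℕ in atTop, (1 + z / n : ℂ) ∈ ({1}ᶜ : Set ℂ) := by
    filter_upwards [eventually_ge_atTop 1] with n hn
    have hn0 : (n : ℂ) ≠ 0 := Nat.cast_ne_zero.mpr (by omega)
    simp only [Set.mem_compl_iff, Set.mem_singleton_iff]
    intro h
    apply hz
    have : z / n = 0 := by linear_combination h
    field_simp at this
    simpa using this
  have hto : Tendsto (fun n : ℕ => (1 + z / n : ℂ)) atTop (𝓝[≠] 1) := by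
    rw [tendsto_nhdsWithin_iff]
    constructor
    · have := hzn.const_add (1:ℂ)
      simpa using this
    · exact hmem
  have h1 : Tendsto (fun n : ℕ => slope Complex.log 1 (1 + z / n)) atTop (𝓝 1) :=
    hslope.comp hto
  have h2 : Tendsto (fun n : ℕ => z * slope Complex.log 1 (1 + z / n)) atTop (𝓝 z) := by
    simpa using h1.const_mul z
  have hlog : Tendsto (fun n : ℕ => (n : ℂ) * Complex.log (1 + z / n)) atTop (𝓝 z) := by
    apply h2.congr'
    filter_upwards [eventually_ge_atTop 1] with n hn
    have hn0 : (n : ℂ) ≠ 0 := Nat.cast_ne_zero.mpr (by omega)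
    simp only [slope_def_field, Complex.log_one]
    rw [sub_zero, add_sub_cancel_left]
    field_simp
  have := (Complex.continuous_exp.tendsto z).comp hlog
  apply this.congr'
  have hsmall : ∀ᶠ n : ℕ in atTop, ‖z / (n:ℂ)‖ < 1 := by
    have := Metric.tendsto_nhds.mp hzn 1 one_pos
    simpa [dist_eq_norm] using this
  filter_upwards [hsmall] with n hn
  have hn' : (1 + z / n : ℂ) ≠ 0 := by
    intro h
    have : z / (n:ℂ) = -1 := by linear_combination h
    rw [this] at hn
    simp at hn
  have hne : (1 + z / n : ℂ) ≠ 0 := hn'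
  simp only [Function.comp]
  rw [Complex.exp_nat_mul, Complex.exp_log hne]

lemma real_rpow_limit (t : ℝ) :
    Tendsto (fun n : ℕ => (1 + t / n) ^ ((n : ℝ) / 2)) atTop (𝓝 (Real.exp (t / 2))) := by
  have h := Real.tendsto_one_add_div_rpow_exp (t / 2)
  have hc : Tendsto (fun n : ℕ => (n : ℝ) / 2) atTop atTop :=
    tendsto_natCast_atTop_atTop.atTop_div_const two_pos
  refine (h.comp hc).congr fun n => ?_
  simp only [Function.comp]
  congr 2
  rcases Nat.eq_zero_or_pos n with rfl | hn
  · simp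
  · have : (n : ℝ) ≠ 0 := Nat.cast_ne_zero.mpr hn.ne'
    field_simp

/-- Universal rescaling limit of the Fubini–Study Bergman kernel:
`(π/n) F_n(u/√n, v/√n) → exp(u·conj v − |u|²/2 − |v|²/2)` where
`F_n(z,w) = ((n+1)/π)(1+z conj w)^n /((1+|z|²)^{n/2}(1+|w|²)^{n/2})`. -/
theorem fubini_study_bergman_rescaling (u v : ℂ) :
    Tendsto (fun n : ℕ =>
      ((Real.pi : ℂ) / (n : ℂ)) *
        ((((n : ℂ) + 1) / (Real.pi : ℂ)) *
          (1 + (u / (Real.sqrt n : ℂ)) * (starRingEnd ℂ) (v / (Real.sqrt n : ℂ))) ^ n /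
          ((((1 + ‖u / (Real.sqrt n : ℂ)‖ ^ 2) ^ ((n : ℝ) / 2) *
            (1 + ‖v / (Real.sqrt n : ℂ)‖ ^ 2) ^ ((n : ℝ) / 2) : ℝ)) : ℂ)))
      atTop
      (nhds (Complex.exp (u * (starRingEnd ℂ) v - (‖u‖ : ℂ) ^ 2 / 2 - (‖v‖ : ℂ) ^ 2 / 2))) := by
  set a := ‖u‖ ^ 2 with ha
  set b := ‖v‖ ^ 2 with hb
  have hA := real_rpow_limit a
  have hB := real_rpow_limit b
  have hP := complex_one_add_div_pow (u * (starRingEnd ℂ) v)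
  have hC : Tendsto (fun n : ℕ => ((n : ℂ) + 1) / n) atTop (𝓝 1) := by
    have h1 := inv_natCast_tendsto_zero.const_add (1 : ℂ)
    rw [add_zero] at h1
    apply h1.congr'
    filter_upwards [eventually_ge_atTop 1] with n hn
    have hn0 : (n : ℂ) ≠ 0 := Nat.cast_ne_zero.mpr (by omega)
    field_simp
  have hD : Tendsto (fun n : ℕ =>
      ((((1 + a / n) ^ ((n : ℝ) / 2) * (1 + b / n) ^ ((n : ℝ) / 2) : ℝ)) : ℂ)) atTop
      (𝓝 ((Real.exp (a / 2) * Real.exp (b / 2) : ℝ) : ℂ)) :=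
    (Complex.continuous_ofReal.tendsto _).comp (hA.mul hB)
  have hDne : (((Real.exp (a / 2) * Real.exp (b / 2) : ℝ)) : ℂ) ≠ 0 := by
    simp [Real.exp_ne_zero]
  have hmain := ((hC.mul hP).div hD hDne)
  have hlim : (1 : ℂ) * Complex.exp (u * (starRingEnd ℂ) v) /
      ((Real.exp (a / 2) * Real.exp (b / 2) : ℝ) : ℂ) =
      Complex.exp (u * (starRingEnd ℂ) v - (‖u‖ : ℂ) ^ 2 / 2 - (‖v‖ : ℂ) ^ 2 / 2) := by
    rw [Complex.exp_sub, Complex.exp_sub, one_mul, div_div, ha, hb]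
    push_cast [Complex.ofReal_exp]
    ring_nf
  rw [← hlim]
  apply hmain.congr'
  filter_upwards [eventually_ge_atTop 1] with n hn
  have hnpos : (0 : ℝ) < n := by exact_mod_cast Nat.pos_of_ne_zero (by omega)
  have hsq : ((Real.sqrt n : ℝ) : ℂ) * ((Real.sqrt n : ℝ) : ℂ) = (n : ℂ) := by
    rw [← Complex.ofReal_mul, Real.mul_self_sqrt hnpos.le]
    norm_cast
  have hsqne : ((Real.sqrt n : ℝ) : ℂ) ≠ 0 := by
    simp [Real.sqrt_eq_zero', not_le, hnpos, Complex.ofReal_eq_zero]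
    positivity
  have hn0 : (n : ℂ) ≠ 0 := Nat.cast_ne_zero.mpr (by omega)
  have hprod : (u / (Real.sqrt n : ℂ)) * (starRingEnd ℂ) (v / (Real.sqrt n : ℂ)) =
      u * (starRingEnd ℂ) v / n := by
    rw [map_div₀, Complex.conj_ofReal]
    rw [div_mul_div_comm, hsq]
  have hnormu : ‖u / (Real.sqrt n : ℂ)‖ ^ 2 = a / n := by
    rw [norm_div, div_pow, Complex.norm_real, Real.norm_eq_abs,
      _root_.abs_of_nonneg (Real.sqrt_nonneg _), Real.sq_sqrt hnpos.le, ha]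
  have hnormv : ‖v / (Real.sqrt n : ℂ)‖ ^ 2 = b / n := by
    rw [norm_div, div_pow, Complex.norm_real, Real.norm_eq_abs,
      _root_.abs_of_nonneg (Real.sqrt_nonneg _), Real.sq_sqrt hnpos.le, hb]
  rw [hprod, hnormu, hnormv]
  have hpi : ((Real.pi : ℝ) : ℂ) ≠ 0 := by
    simp [Complex.ofReal_eq_zero, Real.pi_ne_zero]
  have key : ((Real.pi : ℝ) : ℂ) / (n : ℂ) * (((n : ℂ) + 1) / ((Real.pi : ℝ) : ℂ)) =
      ((n : ℂ) + 1) / n := by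
    field_simp
  symm
  rw [← mul_div_assoc, ← mul_assoc, key]
  simp only [Pi.div_apply]
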